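/- Let M be a real square matrix all of whose eigenvalues have positive real part, and let b be a compatible vector. Then there exists α > 0 such that the Richardson iteration θ_{t+1} = θ_t + α(b − M θ_t) converges to M⁻¹ b from any initial point θ_1. -/

import Mathlib

/-!
The error `θ t - M⁻¹ b` of the iteration is `(1 - α M) ^ t` applied to the initial error, so it
suffices that `1 - α M` has spectral radius `< 1`; by Gelfand's formula its powers then tend to
zero. The eigenvalues of `1 - α M` are `1 - α μ` for the eigenvalues `μ` of `M`, and
`‖1 - α μ‖² = 1 - α (2 re μ - α ‖μ‖²) < 1` once `0 < α < 2 re μ / ‖μ‖²`; since `M` has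
finitely many eigenvalues, one small `α` works for all of them.
-/

open Filter Topology Matrix

section BanachAlgebra

variable {A : Type*} [NormedRing A] [NormedAlgebra ℂ A] [CompleteSpace A]

theorem tendsto_pow_atTop_nhds_zero_of_spectralRadius_lt_one {a : A}
    (h : spectralRadius ℂ a < 1) : Tendsto (a ^ ·) atTop (𝓝 0) := by
  obtain ⟨r, hr, hr1⟩ := ENNReal.lt_iff_exists_nnreal_btwn.mp h
  have hr1 : (r : ℝ) < 1 := by exact_mod_cast hr1
  refine squeeze_zero_norm' ?_ (tendsto_pow_atTop_nhds_zero_of_lt_one r.coe_nonneg hr1)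
  -- Gelfand's formula: eventually `‖a ^ k‖₊ ^ (1 / k) < r`.
  have hroot :=
    (spectrum.pow_nnnorm_pow_one_div_tendsto_nhds_spectralRadius a).eventually_lt_const hr
  filter_upwards [hroot, eventually_ge_atTop 1] with k hk hk1
  have hk0 : (k : ℝ) ≠ 0 := by positivity
  have hpow := ENNReal.rpow_lt_rpow hk (by positivity : (0 : ℝ) < k)
  rw [← ENNReal.rpow_mul, one_div, inv_mul_cancel₀ hk0, ENNReal.rpow_one,
    ENNReal.rpow_natCast] at hpow
  exact_mod_cast hpow.le

theorem tendsto_pow_atTop_nhds_zero_of_forall_spectrum_norm_lt_one {a : A}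
    (h : ∀ z ∈ spectrum ℂ a, ‖z‖ < 1) : Tendsto (a ^ ·) atTop (𝓝 0) := by
  cases subsingleton_or_nontrivial A with
  | inl _ => simp [Subsingleton.elim _ (0 : A)]
  | inr _ =>
    refine tendsto_pow_atTop_nhds_zero_of_spectralRadius_lt_one ?_
    simpa using spectrum.spectralRadius_lt_of_forall_lt (r := 1) a fun z hz => by
      exact_mod_cast h z hz

end BanachAlgebra

theorem spectrum_one_sub_smul {𝕜 A : Type*} [Field 𝕜] [Ring A] [Algebra 𝕜 A] {k : 𝕜}
    (hk : k ≠ 0) (a : A) :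
    spectrum 𝕜 (1 - k • a) = (fun μ => 1 - k * μ) '' spectrum 𝕜 a := by
  rw [← map_one (algebraMap 𝕜 A), ← spectrum.singleton_sub_eq,
    show k • a = Units.mk0 k hk • a from rfl, spectrum.unit_smul_eq_smul]
  ext z
  simp [Set.mem_smul_set, eq_comm]

namespace Complex

theorem norm_one_sub_ofReal_mul_lt_one {μ : ℂ} {α : ℝ} (hα : 0 < α)
    (h : α * normSq μ < 2 * μ.re) : ‖1 - α * μ‖ < 1 := by
  rw [← sq_lt_one_iff₀ (norm_nonneg _), Complex.sq_norm, normSq_apply]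
  rw [normSq_apply] at h
  simp only [sub_re, sub_im, one_re, one_im, mul_re, mul_im, ofReal_re, ofReal_im]
  nlinarith [mul_lt_mul_of_pos_left h hα]

theorem eventually_norm_one_sub_ofReal_mul_lt_one {μ : ℂ} (hμ : 0 < μ.re) :
    ∀ᶠ α : ℝ in 𝓝[>] 0, ‖1 - α * μ‖ < 1 := by
  have hsmall : ∀ᶠ α : ℝ in 𝓝 0, α * normSq μ < 2 * μ.re :=
    ((continuous_id.mul continuous_const).tendsto' (0 : ℝ) 0 (zero_mul _)).eventually_lt_const
      (by linarith)
  filter_upwards [nhdsWithin_le_nhds hsmall, self_mem_nhdsWithin] with α hα hα0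
  exact norm_one_sub_ofReal_mul_lt_one hα0 hα

end Complex

theorem Set.Finite.exists_pos_forall_norm_one_sub_ofReal_mul_lt_one {S : Set ℂ}
    (hS : S.Finite) (h : ∀ μ ∈ S, 0 < μ.re) :
    ∃ α : ℝ, 0 < α ∧ ∀ μ ∈ S, ‖1 - α * μ‖ < 1 := by
  have hall : ∀ᶠ α : ℝ in 𝓝[>] 0, ∀ μ ∈ S, ‖1 - α * μ‖ < 1 :=
    hS.eventually_all.mpr fun μ hμ => Complex.eventually_norm_one_sub_ofReal_mul_lt_one (h μ hμ)
  obtain ⟨α, hα, hα0⟩ := (hall.and self_mem_nhdsWithin).exists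
  exact ⟨α, hα0, hα⟩

namespace Matrix

variable {ι : Type*} [Fintype ι] [DecidableEq ι]

section LinftyOpNorm

attribute [local instance] Matrix.linftyOpNormedAddCommGroup Matrix.linftyOpNormedRing
  Matrix.linftyOpNormedAlgebra

theorem tendsto_pow_atTop_nhds_zero_of_forall_spectrum_map_ofReal_norm_lt_one
    (B : Matrix ι ι ℝ) (h : ∀ z ∈ spectrum ℂ (B.map Complex.ofReal), ‖z‖ < 1) :
    Tendsto (B ^ ·) atTop (𝓝 0) := by
  have hc : Tendsto (fun k : ℕ => (B ^ k).map Complex.ofRealHom) atTop (𝓝 0) := by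
    simp_rw [Matrix.map_pow]
    exact tendsto_pow_atTop_nhds_zero_of_forall_spectrum_norm_lt_one h
  have hre : Continuous fun C : Matrix ι ι ℂ => C.map Complex.re :=
    continuous_id.matrix_map Complex.continuous_re
  simpa [Function.comp_def, Matrix.map_map] using (hre.tendsto 0).comp hc

end LinftyOpNorm

theorem isUnit_det_of_zero_notMem_spectrum_map_ofReal {M : Matrix ι ι ℝ}
    (h : (0 : ℂ) ∉ spectrum ℂ (M.map Complex.ofReal)) : IsUnit M.det := by
  have hu := (isUnit_iff_isUnit_det _).mp ((spectrum.zero_notMem_iff ℂ).mp h)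
  change IsUnit (Complex.ofRealHom.mapMatrix M).det at hu
  rw [← RingHom.map_det, isUnit_iff_ne_zero, map_ne_zero] at hu
  exact hu.isUnit

variable {M : Matrix ι ι ℝ} {b x : ι → ℝ} {α : ℝ} {θ : ℕ → ι → ℝ}

theorem richardson_sub_eq_pow_mulVec (hx : M *ᵥ x = b)
    (hθ : ∀ t, θ (t + 1) = θ t + α • (b - M *ᵥ θ t)) (t : ℕ) :
    θ t - x = (1 - α • M) ^ t *ᵥ (θ 0 - x) := by
  induction t with
  | zero => simp
  | succ t ih =>
    rw [pow_succ', ← mulVec_mulVec, ← ih, hθ t, ← hx, sub_mulVec, one_mulVec, smul_mulVec,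
      mulVec_sub]
    module

theorem tendsto_richardson (hx : M *ᵥ x = b)
    (hB : Tendsto ((1 - α • M) ^ ·) atTop (𝓝 0))
    (hθ : ∀ t, θ (t + 1) = θ t + α • (b - M *ᵥ θ t)) :
    Tendsto θ atTop (𝓝 x) := by
  have herr : Tendsto (fun t => (1 - α • M) ^ t *ᵥ (θ 0 - x)) atTop (𝓝 0) := by
    have hmul : Continuous fun C : Matrix ι ι ℝ => C *ᵥ (θ 0 - x) :=
      continuous_id.matrix_mulVec continuous_const
    simpa [Function.comp_def] using (hmul.tendsto 0).comp hB
  simpa [← richardson_sub_eq_pow_mulVec hx hθ] using herr.add_const x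

end Matrix

/-- Richardson iteration converges to `M⁻¹ b` for some step size `α > 0`
when all (complex) eigenvalues of `M` have positive real part. -/
theorem stmt0 {n : ℕ} (M : Matrix (Fin n) (Fin n) ℝ)
    (hM : ∀ μ ∈ spectrum ℂ (M.map (Complex.ofReal)), 0 < μ.re)
    (b : Fin n → ℝ) :
    ∃ α : ℝ, 0 < α ∧ ∀ θ : ℕ → (Fin n → ℝ),
      (∀ t, θ (t + 1) = θ t + α • (b - M.mulVec (θ t))) →
      Filter.Tendsto θ Filter.atTop (nhds (M⁻¹.mulVec b)) := by
  obtain ⟨α, hα, hcontr⟩ :=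
    (finite_spectrum (M.map Complex.ofReal)).exists_pos_forall_norm_one_sub_ofReal_mul_lt_one hM
  have hdet : IsUnit M.det :=
    isUnit_det_of_zero_notMem_spectrum_map_ofReal fun h0 => (hM 0 h0).ne rfl
  have hx : M *ᵥ (M⁻¹ *ᵥ b) = b := by
    rw [mulVec_mulVec, mul_nonsing_inv M hdet, one_mulVec]
  refine ⟨α, hα, fun θ hθ => tendsto_richardson hx ?_ hθ⟩
  refine tendsto_pow_atTop_nhds_zero_of_forall_spectrum_map_ofReal_norm_lt_one _ ?_
  have hmap : (1 - α • M).map Complex.ofReal = 1 - (α : ℂ) • M.map Complex.ofReal := by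
    ext i j
    by_cases h : i = j <;> simp [one_apply, h]
  rw [hmap, spectrum_one_sub_smul (by exact_mod_cast hα.ne')]
  rintro _ ⟨μ, hμ, rfl⟩
  exact hcontr μ hμ
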